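/- arXiv:1603.04502 — 3 statements merged into one kernel-verified Lean document; each statement's English description precedes it below -/
import Mathlib

section
/- Let ε > 0, let E : ℝ × ℝ² → ℝ² be any map, and let f : ℝ × ℝ² × ℝ² → ℝ be differentiable. Assume that for all (t, x, v), ∂_t f(t,x,v) + (v/ε) · ∇_x f(t,x,v) + (E(t,x)/ε + v^⊥/ε²) · ∇_v f(t,x,v) = 0. Define f̄(t,x,v) = f(t, x − ε v^⊥, v). Then for all (t,x,v), ∂_t f̄(t,x,v) + (E(t, x − ε v^⊥))^⊥ · ∇_x f̄(t,x,v) + (v^⊥/ε² + E(t, x − ε v^⊥)/ε) · ∇_v f̄(t,x,v) = 0. -/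
/-!
The gyro change of variables `G (t, x, v) = (t, x - ε v^⊥, v)` is linear and `f̄ = f ∘ G`, so by
the chain rule the derivative of `f̄` at `p` in direction `u` is the derivative of `f` at `G p` in
direction `G u`. Since `(v^⊥)^⊥ = -v`, `G` maps the field `(1, E^⊥, v^⊥/ε² + E/ε)` to
`(1, E^⊥ + v/ε - E^⊥, v^⊥/ε² + E/ε) = (1, v/ε, E/ε + v^⊥/ε²)`, the Vlasov field at `G p`.
-/

noncomputable abbrev R2 : Type := EuclideanSpace ℝ (Fin 2)

/-- For `w = (w₁, w₂) ∈ ℝ²`, `perp w = (−w₂, w₁)`. -/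
noncomputable def perp (w : R2) : R2 := WithLp.toLp 2 ![-w 1, w 0]

lemma perp_add (a b : R2) : perp (a + b) = perp a + perp b := by
  ext i; fin_cases i <;> simp [perp]; ring

lemma perp_smul (c : ℝ) (a : R2) : perp (c • a) = c • perp a := by
  ext i; fin_cases i <;> simp [perp]

lemma perp_perp (a : R2) : perp (perp a) = -a := by
  ext i; fin_cases i <;> simp [perp]

noncomputable def gyro (ε : ℝ) : (ℝ × R2 × R2) →L[ℝ] (ℝ × R2 × R2) :=
  LinearMap.toContinuousLinearMap
    { toFun := fun p => (p.1, p.2.1 - ε • perp p.2.2, p.2.2)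
      map_add' := fun p q => by
        simp only [Prod.fst_add, Prod.snd_add, perp_add, smul_add, Prod.mk_add_mk]
        congr 2
        abel
      map_smul' := fun c p => by
        simp only [Prod.smul_fst, Prod.smul_snd, perp_smul, smul_comm ε c, smul_sub,
          RingHom.id_apply, Prod.smul_mk] }

lemma gyro_apply (ε : ℝ) (p : ℝ × R2 × R2) :
    gyro ε p = (p.1, p.2.1 - ε • perp p.2.2, p.2.2) := rfl

lemma gyro_apply_gyroField {ε : ℝ} (hε : ε ≠ 0) (e v : R2) :
    gyro ε (1, perp e, (ε ^ 2)⁻¹ • perp v + ε⁻¹ • e) =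
      (1, ε⁻¹ • v, ε⁻¹ • e + (ε ^ 2)⁻¹ • perp v) := by
  have hε2 : ε * (ε ^ 2)⁻¹ = ε⁻¹ := by field_simp
  simp only [gyro_apply, perp_add, perp_smul, perp_perp, smul_add, smul_smul, hε2,
    mul_inv_cancel₀ hε, one_smul, smul_neg, add_comm (ε⁻¹ • e)]
  congr 2
  abel

lemma fderiv_comp_clm_apply {E F : Type*} [NormedAddCommGroup E] [NormedSpace ℝ E]
    [NormedAddCommGroup F] [NormedSpace ℝ F] {f : F → ℝ} (L : E →L[ℝ] F) {p : E}
    (hf : DifferentiableAt ℝ f (L p)) (u : E) :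
    fderiv ℝ (f ∘ L) p u = fderiv ℝ f (L p) (L u) := by
  rw [fderiv_comp p hf L.differentiableAt, L.fderiv, ContinuousLinearMap.comp_apply]

/-- If `f` is a differentiable solution of the Vlasov equation
`∂_t f + (v/ε)·∇_x f + (E(t,x)/ε + v^⊥/ε²)·∇_v f = 0`, then the gyro-density
`f̄(t,x,v) = f(t, x − ε v^⊥, v)` satisfies
`∂_t f̄ + (E(t, x − εv^⊥))^⊥·∇_x f̄ + (v^⊥/ε² + E(t, x − εv^⊥)/ε)·∇_v f̄ = 0`. -/
theorem vlasov_gyro_coordinates (ε : ℝ) (hε : 0 < ε)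
    (E : ℝ × R2 → R2) (f : ℝ × R2 × R2 → ℝ) (hf : Differentiable ℝ f)
    (hPDE : ∀ t x v, fderiv ℝ f (t, x, v)
      (1, ε⁻¹ • v, ε⁻¹ • E (t, x) + (ε ^ 2)⁻¹ • perp v) = 0) :
    ∀ t x v,
      fderiv ℝ (fun p : ℝ × R2 × R2 => f (p.1, p.2.1 - ε • perp p.2.2, p.2.2)) (t, x, v)
        (1, perp (E (t, x - ε • perp v)),
          (ε ^ 2)⁻¹ • perp v + ε⁻¹ • E (t, x - ε • perp v)) = 0 := by
  intro t x v
  change fderiv ℝ (f ∘ gyro ε) (t, x, v) _ = 0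
  rw [fderiv_comp_clm_apply _ (hf _), gyro_apply_gyroField hε.ne']
  exact hPDE t (x - ε • perp v) v
end

section
/- Let ε > 0, let E : ℝ² → ℝ² be C¹, let g : ℝ² → ℝ be C¹ and compactly supported, and let x ∈ ℝ². Then ∫_{ℝ²} E(x − ε v^⊥) · ∇g(v) dv = ε ∫_{ℝ²} (∂₂E₁ − ∂₁E₂)(x − ε v^⊥) g(v) dv. -/
/-! Write `F v = E (x - ε v^⊥)`. Integrating by parts coordinatewise turns the left side into
`-∫ (div F) g`. The derivative of `v ↦ x - ε v^⊥` is `-ε` times the rotation `e₁ ↦ e₂`,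
`e₂ ↦ -e₁`, so by the chain rule `div F v = -ε (∂₂E₁ - ∂₁E₂)(x - ε v^⊥)`. -/

open MeasureTheory

section Divergence

variable {ι : Type*} [Fintype ι] [DecidableEq ι]

noncomputable def divergence (F : EuclideanSpace ℝ ι → EuclideanSpace ℝ ι)
    (v : EuclideanSpace ℝ ι) : ℝ :=
  ∑ i, fderiv ℝ F v (EuclideanSpace.single i 1) i

omit [DecidableEq ι] in
theorem fderiv_euclidean_apply {F : EuclideanSpace ℝ ι → EuclideanSpace ℝ ι}
    {v : EuclideanSpace ℝ ι} (hF : DifferentiableAt ℝ F v) (i : ι) (u : EuclideanSpace ℝ ι) :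
    fderiv ℝ (fun w ↦ F w i) v u = fderiv ℝ F v u i := by
  have h : HasFDerivAt (fun w ↦ F w i) ((PiLp.proj 2 _ i).comp (fderiv ℝ F v)) v :=
    (PiLp.hasFDerivAt_apply (𝕜 := ℝ) 2 (F v) i).comp v hF.hasFDerivAt
  rw [h.fderiv]
  rfl

theorem ContinuousLinearMap.apply_eq_sum_mul_apply_single (L : EuclideanSpace ℝ ι →L[ℝ] ℝ)
    (w : EuclideanSpace ℝ ι) : L w = ∑ i, w i * L (EuclideanSpace.single i 1) := by
  conv_lhs => rw [← (EuclideanSpace.basisFun ι ℝ).sum_repr w]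
  simp [map_sum, smul_eq_mul]

variable [MeasurableSpace (EuclideanSpace ℝ ι)] [BorelSpace (EuclideanSpace ℝ ι)]
  {μ : Measure (EuclideanSpace ℝ ι)} [μ.IsAddHaarMeasure]

theorem integral_fderiv_apply_eq_neg_integral_divergence_mul
    {F : EuclideanSpace ℝ ι → EuclideanSpace ℝ ι} (hF : ContDiff ℝ 1 F)
    {g : EuclideanSpace ℝ ι → ℝ} (hg : ContDiff ℝ 1 g) (hgs : HasCompactSupport g) :
    ∫ v, fderiv ℝ g v (F v) ∂μ = -∫ v, divergence F v * g v ∂μ := by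
  have hFd := hF.differentiable one_ne_zero
  have hgd := hg.differentiable one_ne_zero
  have hFc (i : ι) : Continuous fun v ↦ F v i :=
    (EuclideanSpace.proj i).continuous.comp hF.continuous
  have hF'c (u : EuclideanSpace ℝ ι) (i : ι) : Continuous fun v ↦ fderiv ℝ F v u i :=
    (EuclideanSpace.proj i).continuous.comp
      ((hF.continuous_fderiv one_ne_zero).clm_apply continuous_const)
  have integrable_mul_g {h : EuclideanSpace ℝ ι → ℝ} (hh : Continuous h) :
      Integrable (fun v ↦ h v * g v) μ :=
    (hh.mul hg.continuous).integrable_of_hasCompactSupport hgs.mul_left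
  have integrable_mul_g' {h : EuclideanSpace ℝ ι → ℝ} (hh : Continuous h) (u) :
      Integrable (fun v ↦ h v * fderiv ℝ g v u) μ :=
    (hh.mul ((hg.continuous_fderiv one_ne_zero).clm_apply continuous_const))
      |>.integrable_of_hasCompactSupport (hgs.fderiv_apply ℝ u).mul_left
  have ibp (i : ι) : ∫ v, F v i * fderiv ℝ g v (EuclideanSpace.single i 1) ∂μ
      = -∫ v, fderiv ℝ F v (EuclideanSpace.single i 1) i * g v ∂μ := by
    simp_rw [← fderiv_euclidean_apply (hFd _)]
    refine integral_mul_fderiv_eq_neg_fderiv_mul_of_integrable ?_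
      (integrable_mul_g' (hFc i) _) (integrable_mul_g (hFc i))
      (fun v _ ↦ differentiableAt_euclidean.1 (hFd v) i) (fun v _ ↦ hgd v)
    simp_rw [fderiv_euclidean_apply (hFd _)]
    exact integrable_mul_g (hF'c _ i)
  calc ∫ v, fderiv ℝ g v (F v) ∂μ
      = ∫ v, ∑ i, F v i * fderiv ℝ g v (EuclideanSpace.single i 1) ∂μ := by
        simp_rw [← ContinuousLinearMap.apply_eq_sum_mul_apply_single]
    _ = ∑ i, -∫ v, fderiv ℝ F v (EuclideanSpace.single i 1) i * g v ∂μ := by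
        rw [integral_finsetSum _ fun i _ ↦ integrable_mul_g' (hFc i) _]
        exact Finset.sum_congr rfl fun i _ ↦ ibp i
    _ = -∫ v, divergence F v * g v ∂μ := by
        rw [Finset.sum_neg_distrib,
          ← integral_finsetSum _ fun i _ ↦ integrable_mul_g (hF'c _ i)]
        simp_rw [divergence, Finset.sum_mul]

end Divergence

noncomputable def curl (E : R2 → R2) (y : R2) : ℝ :=
  fderiv ℝ E y (EuclideanSpace.single 1 1) 0 - fderiv ℝ E y (EuclideanSpace.single 0 1) 1

noncomputable def perpL : R2 →L[ℝ] R2 :=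
  LinearMap.toContinuousLinearMap
    { toFun := perp
      map_add' := fun w w' ↦ by ext i; fin_cases i <;> simp [perp, add_comm]
      map_smul' := fun c w ↦ by ext i; fin_cases i <;> simp [perp] }

@[simp]
theorem perpL_apply (w : R2) : perpL w = perp w := rfl

@[simp]
theorem perp_single_zero : perp (EuclideanSpace.single 0 1) = EuclideanSpace.single 1 1 := by
  ext i; fin_cases i <;> simp [perp]

@[simp]
theorem perp_single_one : perp (EuclideanSpace.single 1 1) = -EuclideanSpace.single 0 1 := by
  ext i; fin_cases i <;> simp [perp]

theorem hasFDerivAt_sub_smul_perp (x : R2) (ε : ℝ) (v : R2) :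
    HasFDerivAt (fun v ↦ x - ε • perp v) (-(ε • perpL)) v :=
  (perpL.hasFDerivAt.const_smul ε).const_sub x

theorem divergence_comp_sub_smul_perp {E : R2 → R2} {x : R2} {ε : ℝ} {v : R2}
    (hE : DifferentiableAt ℝ E (x - ε • perp v)) :
    divergence (fun v ↦ E (x - ε • perp v)) v = -ε * curl E (x - ε • perp v) := by
  have h : HasFDerivAt (fun v ↦ E (x - ε • perp v))
      ((fderiv ℝ E (x - ε • perp v)).comp (-(ε • perpL))) v :=
    hE.hasFDerivAt.comp v (hasFDerivAt_sub_smul_perp x ε v)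
  rw [divergence, h.fderiv, curl]
  simp [Fin.sum_univ_two]
  ring

theorem integration_by_parts_gyro_general (ε : ℝ)
    (E : R2 → R2) (hE : ContDiff ℝ 1 E)
    (g : R2 → ℝ) (hg : ContDiff ℝ 1 g) (hgsupp : HasCompactSupport g)
    (x : R2) :
    ∫ v, fderiv ℝ g v (E (x - ε • perp v))
      = ε * ∫ v, (fderiv ℝ E (x - ε • perp v) (EuclideanSpace.single 1 1) 0
          - fderiv ℝ E (x - ε • perp v) (EuclideanSpace.single 0 1) 1) * g v := by
  have hF : ContDiff ℝ 1 fun v ↦ E (x - ε • perp v) :=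
    hE.comp (contDiff_const.sub (perpL.contDiff.const_smul ε))
  rw [integral_fderiv_apply_eq_neg_integral_divergence_mul hF hg hgsupp]
  simp_rw [divergence_comp_sub_smul_perp ((hE.differentiable one_ne_zero) _), mul_assoc,
    integral_const_mul, neg_mul, neg_neg]
  rfl

/-- For a `C¹` field `E : ℝ² → ℝ²` and a `C¹` compactly supported `g : ℝ² → ℝ`,
`∫ E(x − εv^⊥)·∇g(v) dv = ε ∫ (∂₂E₁ − ∂₁E₂)(x − εv^⊥) g(v) dv`. -/
theorem integration_by_parts_gyro (ε : ℝ) (hε : 0 < ε)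
    (E : R2 → R2) (hE : ContDiff ℝ 1 E)
    (g : R2 → ℝ) (hg : ContDiff ℝ 1 g) (hgsupp : HasCompactSupport g)
    (x : R2) :
    ∫ v, fderiv ℝ g v (E (x - ε • perp v))
      = ε * ∫ v, (fderiv ℝ E (x - ε • perp v) (EuclideanSpace.single 1 1) 0
          - fderiv ℝ E (x - ε • perp v) (EuclideanSpace.single 0 1) 1) * g v :=
  integration_by_parts_gyro_general ε E hE g hg hgsupp x
end

section
/- Let ρ : ℝ² → [0,∞) be measurable, bounded, integrable and compactly supported, and define E(x) = ∫_{ℝ²} ((x−y)/|x−y|²) ρ(y) dy. Then ∫_{ℝ²} ρ(x) E(x) · x^⊥ dx = 0. -/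
open MeasureTheory
open scoped RealInnerProductSpace

/-!
Written as a double integral, the moment is `∫∫ ρ(x) ρ(y) ⟪x^⊥, x - y⟫ / |x - y|² dy dx`, and the
integrand is antisymmetric in `(x, y)` because `⟪x^⊥ - y^⊥, x - y⟫ = 0`; so the integral vanishes as
soon as Fubini applies. Absolute integrability holds because `|x^⊥| = |x|` is bounded on the support
of `ρ`, and `ρ(y) / |x - y| ≤ M 𝟙_{|x - y| < 1} / |x - y| + ρ(y)`, where the first kernel is
integrable in the plane and the second term is integrable since `ρ` is.
-/

open Metric Set Function Module

lemma perp_sub (x y : R2) : perp (x - y) = perp x - perp y := by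
  ext i
  fin_cases i <;> simp [perp, add_comm, sub_eq_add_neg]

lemma inner_perp_self (w : R2) : ⟪perp w, w⟫ = 0 := by
  simp [perp, PiLp.inner_apply, Fin.sum_univ_two, mul_comm]

lemma inner_perp_sub_eq (x y : R2) : ⟪perp x, x - y⟫ = ⟪perp y, x - y⟫ := by
  rw [← sub_eq_zero, ← inner_sub_left, ← perp_sub, inner_perp_self]

lemma norm_perp (w : R2) : ‖perp w‖ = ‖w‖ := by
  simp [perp, EuclideanSpace.norm_eq, Fin.sum_univ_two, add_comm]

@[fun_prop]
lemma continuous_perp : Continuous perp := by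
  unfold perp
  fun_prop

section Kernel

variable {E : Type*} [NormedAddCommGroup E]

lemma mul_inv_norm_le_indicator_add {c M : ℝ} (hc : 0 ≤ c) (hcM : c ≤ M) (z : E) :
    c * ‖z‖⁻¹ ≤ M * (ball 0 1).indicator (fun z => ‖z‖⁻¹) z + c := by
  by_cases hz : z ∈ ball (0 : E) 1
  · rw [indicator_of_mem hz]
    nlinarith [inv_nonneg.mpr (norm_nonneg z)]
  · rw [indicator_of_notMem hz, mul_zero, zero_add]
    rw [mem_ball_zero_iff, not_lt] at hz
    exact mul_le_of_le_one_right hc (inv_le_one_of_one_le₀ hz)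

variable [NormedSpace ℝ E]

lemma norm_inv_norm_sq_smul_smul (c : ℝ) (z : E) : ‖(‖z‖ ^ 2)⁻¹ • c • z‖ = |c| * ‖z‖⁻¹ := by
  rcases eq_or_ne z 0 with rfl | hz
  · simp
  · have : ‖z‖ ≠ 0 := norm_ne_zero_iff.mpr hz
    rw [norm_smul, norm_smul, norm_inv, norm_pow, norm_norm, Real.norm_eq_abs]
    field_simp

variable [FiniteDimensional ℝ E] [MeasurableSpace E] [BorelSpace E]
  {μ : Measure E} [μ.IsAddHaarMeasure]

lemma integrable_indicator_ball_inv_norm (hd : 1 < finrank ℝ E) :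
    Integrable ((ball (0 : E) 1).indicator fun z => ‖z‖⁻¹) μ := by
  rw [integrable_indicator_iff measurableSet_ball]
  refine integrableOn_ball_of_norm_le_rpow hd.le (C := 1) (α := 1) (by exact_mod_cast hd)
    (ae_of_all _ fun z => ?_) (by fun_prop)
  simp [Real.rpow_neg_one]

variable {ρ : E → ℝ} {M : ℝ}

lemma integrable_inv_norm_sq_smul_smul_sub (hd : 1 < finrank ℝ E) (hρ : Integrable ρ μ)
    (h0 : ∀ y, 0 ≤ ρ y) (hM : ∀ y, ρ y ≤ M) (x : E) :
    Integrable (fun y => (‖x - y‖ ^ 2)⁻¹ • ρ y • (x - y)) μ := by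
  refine Integrable.mono'
    (((integrable_indicator_ball_inv_norm hd).comp_sub_left x).const_mul M |>.add hρ)
    (by fun_prop) (ae_of_all _ fun y => ?_)
  rw [norm_inv_norm_sq_smul_smul, abs_of_nonneg (h0 y)]
  exact mul_inv_norm_le_indicator_add (h0 y) (hM y) (x - y)

lemma integrable_prod_mul_inv_norm_sub (hd : 1 < finrank ℝ E) {g : E → ℝ} (hg : Integrable g μ)
    (hρ : Integrable ρ μ) (h0 : ∀ y, 0 ≤ ρ y) (hM : ∀ y, ρ y ≤ M) :
    Integrable (fun p : E × E => g p.1 * (ρ p.2 * ‖p.1 - p.2‖⁻¹)) (μ.prod μ) := by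
  have hnear : Integrable (fun p : E × E =>
      |g p.1| * (ball (0 : E) 1).indicator (fun z => ‖z‖⁻¹) (p.2 - p.1)) (μ.prod μ) :=
    (hg.abs.convolution_integrand (ContinuousLinearMap.mul ℝ ℝ)
      (integrable_indicator_ball_inv_norm hd)).swap
  refine Integrable.mono' ((hnear.const_mul M).add (hg.abs.mul_prod hρ))
    (hg.aestronglyMeasurable.comp_fst.mul
      (hρ.aestronglyMeasurable.comp_snd.mul (by fun_prop))) (ae_of_all _ fun ⟨x, y⟩ => ?_)
  rw [norm_mul, Real.norm_of_nonneg (mul_nonneg (h0 y) (inv_nonneg.mpr (norm_nonneg _))),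
    Real.norm_eq_abs, norm_sub_rev]
  calc |g x| * (ρ y * ‖y - x‖⁻¹)
      ≤ |g x| * (M * (ball 0 1).indicator (fun z => ‖z‖⁻¹) (y - x) + ρ y) :=
        mul_le_mul_of_nonneg_left (mul_inv_norm_le_indicator_add (h0 y) (hM y) _) (abs_nonneg _)
    _ = _ := by simp only [Pi.add_apply]; ring

end Kernel

lemma MeasureTheory.Integrable.continuous_mul_of_hasCompactSupport {X : Type*}
    [TopologicalSpace X] [T2Space X] [MeasurableSpace X] [OpensMeasurableSpace X]
    {μ : Measure X} {f g : X → ℝ} (hf : Integrable f μ) (hcf : HasCompactSupport f)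
    (hg : Continuous g) : Integrable (fun x => g x * f x) μ := by
  rw [← integrableOn_iff_integrable_of_support_subset
    ((support_mul_subset_right g f).trans (subset_tsupport f))]
  exact hf.integrableOn.continuousOn_mul hg.continuousOn hcf

lemma integral_prod_eq_zero_of_antisymm {α : Type*} [MeasurableSpace α] {μ : Measure α}
    [SFinite μ] {F : α → α → ℝ} (hF : ∀ x y, F y x = -F x y) :
    ∫ p, F p.1 p.2 ∂μ.prod μ = 0 := by
  have hswap := integral_prod_swap (fun p : α × α => F p.1 p.2) (μ := μ) (ν := μ)
  rw [show (fun p : α × α => F p.swap.1 p.swap.2) = fun p => -F p.1 p.2 from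
    funext fun p => hF p.1 p.2, integral_neg] at hswap
  linarith

section FieldMoment

variable {ρ : R2 → ℝ}

noncomputable def fieldMomentIntegrand (ρ : R2 → ℝ) (x y : R2) : ℝ :=
  ρ x * ⟪perp x, (‖x - y‖ ^ 2)⁻¹ • ρ y • (x - y)⟫

lemma fieldMomentIntegrand_swap (x y : R2) :
    fieldMomentIntegrand ρ y x = -fieldMomentIntegrand ρ x y := by
  simp only [fieldMomentIntegrand, inner_smul_right, ← neg_sub x y, inner_neg_right, norm_neg,
    inner_perp_sub_eq x y]
  ring

lemma norm_fieldMomentIntegrand_le (hpos : ∀ x, 0 ≤ ρ x) (x y : R2) :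
    ‖fieldMomentIntegrand ρ x y‖ ≤ ‖x‖ * ρ x * (ρ y * ‖x - y‖⁻¹) :=
  calc ‖fieldMomentIntegrand ρ x y‖
      ≤ ρ x * (‖perp x‖ * ‖(‖x - y‖ ^ 2)⁻¹ • ρ y • (x - y)‖) := by
        rw [fieldMomentIntegrand, norm_mul, Real.norm_of_nonneg (hpos x)]
        exact mul_le_mul_of_nonneg_left (norm_inner_le_norm _ _) (hpos x)
    _ = ‖x‖ * ρ x * (ρ y * ‖x - y‖⁻¹) := by
        rw [norm_perp, norm_inv_norm_sq_smul_smul, abs_of_nonneg (hpos y)]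
        ring

lemma integrable_fieldMomentIntegrand (hpos : ∀ x, 0 ≤ ρ x) {M : ℝ} (hbdd : ∀ x, ρ x ≤ M)
    (hint : Integrable ρ) (hsupp : HasCompactSupport ρ) :
    Integrable (uncurry (fieldMomentIntegrand ρ)) (volume.prod volume) := by
  have hmeas : AEStronglyMeasurable (uncurry (fieldMomentIntegrand ρ)) (volume.prod volume) :=
    hint.aestronglyMeasurable.comp_fst.mul
      ((by fun_prop : Continuous fun p : R2 × R2 => perp p.1).aestronglyMeasurable.inner
        ((by fun_prop : Measurable fun p : R2 × R2 => (‖p.1 - p.2‖ ^ 2)⁻¹).aestronglyMeasurable.smul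
          (hint.aestronglyMeasurable.comp_snd.smul (by fun_prop))))
  exact (integrable_prod_mul_inv_norm_sub (by simp)
    (hint.continuous_mul_of_hasCompactSupport hsupp continuous_norm) hint hpos hbdd).mono'
    hmeas (ae_of_all _ fun p => norm_fieldMomentIntegrand_le hpos p.1 p.2)

end FieldMoment

theorem field_moment_vanishes_general (ρ : R2 → ℝ) (hpos : ∀ x, 0 ≤ ρ x)
    (M : ℝ) (hbdd : ∀ x, ρ x ≤ M) (hint : Integrable ρ) (hsupp : HasCompactSupport ρ)
    (E : R2 → R2) (hE : ∀ x, E x = ∫ y, (‖x - y‖ ^ 2)⁻¹ • ρ y • (x - y)) :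
    ∫ x, ρ x * ⟪E x, perp x⟫ = 0 := by
  have hsection (x : R2) : ρ x * ⟪E x, perp x⟫ = ∫ y, fieldMomentIntegrand ρ x y := by
    rw [hE x, real_inner_comm,
      ← integral_inner (integrable_inv_norm_sq_smul_smul_sub (by simp) hint hpos hbdd x),
      ← integral_const_mul]
    rfl
  calc ∫ x, ρ x * ⟪E x, perp x⟫ = ∫ x, ∫ y, fieldMomentIntegrand ρ x y := by simp_rw [hsection]
    _ = ∫ p, fieldMomentIntegrand ρ p.1 p.2 ∂volume.prod volume :=
        integral_integral (integrable_fieldMomentIntegrand hpos hbdd hint hsupp)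
    _ = 0 := integral_prod_eq_zero_of_antisymm fieldMomentIntegrand_swap

/-- For a nonnegative, measurable, bounded, integrable and compactly supported `ρ` with
field `E(x) = ∫ ((x−y)/|x−y|²) ρ(y) dy`, one has `∫ ρ(x) E(x)·x^⊥ dx = 0`. -/
theorem field_moment_vanishes (ρ : R2 → ℝ) (hmeas : Measurable ρ) (hpos : ∀ x, 0 ≤ ρ x)
    (M : ℝ) (hbdd : ∀ x, ρ x ≤ M) (hint : Integrable ρ) (hsupp : HasCompactSupport ρ)
    (E : R2 → R2) (hE : ∀ x, E x = ∫ y, (‖x - y‖ ^ 2)⁻¹ • ρ y • (x - y)) :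
    ∫ x, ρ x * ⟪E x, perp x⟫ = 0 :=
  field_moment_vanishes_general ρ hpos M hbdd hint hsupp E hE
end
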